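/- arXiv:1303.4902 — 7 statements merged into one kernel-verified Lean document; each statement's English description precedes it below -/
import Mathlib

section
/- If U is a prefix-free subset of binary strings, then the measure of the open set generated by the n-fold concatenation set U^n equals the n-th power of the measure of [U]; i.e., μ([U^n]) = μ([U])^n. -/
open scoped ENNReal
open MeasureTheory Filter

def cyl (σ : List Bool) : Set (ℕ → Bool) :=
  {X | ∀ i : Fin σ.length, X i = σ.get i}

def opensOf (U : Set (List Bool)) : Set (ℕ → Bool) :=
  ⋃ σ ∈ U, cyl σ

def PrefixFree (U : Set (List Bool)) : Prop :=
  ∀ σ ∈ U, ∀ τ ∈ U, σ <+: τ → σ = τ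

def IsUniform (μ : Measure (ℕ → Bool)) : Prop :=
  ∀ σ : List Bool, μ (cyl σ) = (1 / 2 : ℝ≥0∞) ^ σ.length

def concatN (U : Set (List Bool)) (n : ℕ) : Set (List Bool) :=
  {σ | ∃ l : List (List Bool), l.length = n ∧ (∀ τ ∈ l, τ ∈ U) ∧ σ = l.flatten}

def seqTake (X : ℕ → Bool) (n : ℕ) : List Bool := List.ofFn fun i : Fin n => X i

def seqAppend (σ : List Bool) (Y : ℕ → Bool) : ℕ → Bool :=
  fun n => if h : n < σ.length then σ.get ⟨n, h⟩ else Y (n - σ.length)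

def prefixOfSeq (σ : List Bool) (X : ℕ → Bool) : Prop :=
  ∀ i : Fin σ.length, X i = σ.get i

def concatOmega (U : Set (List Bool)) : Set (ℕ → Bool) :=
  {X | ∃ f : ℕ → List Bool, (∀ i, f i ∈ U) ∧
    ∀ n : ℕ, prefixOfSeq (((List.range n).map f).flatten) X}

def IsMartingale (d : List Bool → ℝ) : Prop :=
  (∀ σ, 0 ≤ d σ) ∧ ∀ σ, d σ = (d (σ ++ [false]) + d (σ ++ [true])) / 2

def Succeeds (d : List Bool → ℝ) (X : ℕ → Bool) : Prop :=
  ∀ C : ℝ, ∀ m : ℕ, ∃ n ≥ m, C ≤ d (seqTake X n)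

def winningSet (d : List Bool → ℝ) (q : ℝ) : Set (List Bool) :=
  {σ | q ≤ d σ ∧ ∀ τ : List Bool, τ <+: σ → τ ≠ σ → d τ < q}

/-!
For a prefix-free set of strings the cylinders `[σ]` are pairwise disjoint, so `μ [S]` is the
Kraft sum `∑_{σ ∈ S} 2^{-|σ|}`. Since `U` is prefix-free, every string of `U^{n+1} = U · U^n`
splits uniquely as `a ++ b` with `a ∈ U`, `b ∈ U^n`; hence `U^{n+1}` is again prefix-free and its
Kraft sum is the product of those of `U` and `U^n`.
-/

noncomputable def kraftSum (S : Set (List Bool)) : ℝ≥0∞ :=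
  ∑' σ : S, (1 / 2 : ℝ≥0∞) ^ (σ : List Bool).length

lemma measurableSet_cyl (σ : List Bool) : MeasurableSet (cyl σ) := by
  have : cyl σ = ⋂ i : Fin σ.length, (fun X : ℕ → Bool => X i) ⁻¹' {σ.get i} := by
    ext X; simp [cyl]
  rw [this]
  exact .iInter fun i => measurable_pi_apply _ (.singleton _)

lemma prefix_of_mem_cyl_of_length_le {σ τ : List Bool} {X : ℕ → Bool}
    (hσ : X ∈ cyl σ) (hτ : X ∈ cyl τ) (hlen : σ.length ≤ τ.length) : σ <+: τ := by
  rw [List.prefix_iff_eq_take]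
  refine List.ext_get (by simpa using hlen) fun i hi _ => ?_
  have hσi := hσ ⟨i, hi⟩
  have hτi := hτ ⟨i, hi.trans_le hlen⟩
  simp only [List.get_eq_getElem, List.getElem_take] at hσi hτi ⊢
  rw [← hσi, hτi]

lemma disjoint_cyl_of_not_prefix {σ τ : List Bool} (hστ : ¬σ <+: τ) (hτσ : ¬τ <+: σ) :
    Disjoint (cyl σ) (cyl τ) := by
  refine Set.disjoint_left.2 fun X hσ hτ => ?_
  rcases le_total σ.length τ.length with h | h
  · exact hστ (prefix_of_mem_cyl_of_length_le hσ hτ h)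
  · exact hτσ (prefix_of_mem_cyl_of_length_le hτ hσ h)

lemma measure_opensOf_eq_kraftSum {μ : Measure (ℕ → Bool)} (hμ : IsUniform μ)
    {S : Set (List Bool)} (hS : PrefixFree S) : μ (opensOf S) = kraftSum S := by
  have hdisj : Pairwise fun σ τ : S => Disjoint (cyl σ) (cyl τ) := fun σ τ hne =>
    disjoint_cyl_of_not_prefix (fun h => hne (Subtype.ext (hS _ σ.2 _ τ.2 h)))
      (fun h => hne (Subtype.ext (hS _ τ.2 _ σ.2 h)).symm)
  rw [opensOf, Set.biUnion_eq_iUnion, measure_iUnion hdisj fun _ => measurableSet_cyl _]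
  exact tsum_congr fun σ => hμ σ

lemma PrefixFree.eq_of_append_prefix_append {U : Set (List Bool)} (hU : PrefixFree U)
    {a b c d : List Bool} (ha : a ∈ U) (hc : c ∈ U) (h : a ++ b <+: c ++ d) : a = c := by
  rcases List.prefix_or_prefix_of_prefix ((a.prefix_append b).trans h) (c.prefix_append d)
    with hac | hca
  · exact hU a ha c hc hac
  · exact (hU c hc a ha hca).symm

lemma PrefixFree.image2_append {U V : Set (List Bool)} (hU : PrefixFree U)
    (hV : PrefixFree V) : PrefixFree (Set.image2 (· ++ ·) U V) := by
  rintro _ ⟨a, ha, b, hb, rfl⟩ _ ⟨c, hc, d, hd, rfl⟩ h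
  obtain rfl := hU.eq_of_append_prefix_append ha hc h
  rw [hV b hb d hd ((List.prefix_append_right_inj a).1 h)]

lemma PrefixFree.injOn_append {U V : Set (List Bool)} (hU : PrefixFree U) :
    Set.InjOn (Function.uncurry (· ++ ·)) (U ×ˢ V) := by
  rintro ⟨a, b⟩ ⟨ha, -⟩ ⟨c, d⟩ ⟨hc, -⟩ (h : a ++ b = c ++ d)
  obtain rfl := hU.eq_of_append_prefix_append ha hc (by rw [h])
  rw [List.append_cancel_left h]

lemma kraftSum_image2_append {U : Set (List Bool)} (hU : PrefixFree U) (V : Set (List Bool)) :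
    kraftSum (Set.image2 (· ++ ·) U V) = kraftSum U * kraftSum V := by
  rw [kraftSum, ← Set.image_uncurry_prod,
    tsum_image (fun σ => (1 / 2 : ℝ≥0∞) ^ σ.length) hU.injOn_append,
    ← (Equiv.Set.prod U V).symm.tsum_eq, ENNReal.tsum_prod', kraftSum, kraftSum,
    ← ENNReal.tsum_mul_right]
  refine tsum_congr fun a => ?_
  rw [← ENNReal.tsum_mul_left]
  refine tsum_congr fun b => ?_
  rw [← pow_add, ← List.length_append]
  rfl

lemma concatN_zero (U : Set (List Bool)) : concatN U 0 = {[]} := by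
  ext σ
  simp [concatN]

lemma concatN_succ (U : Set (List Bool)) (n : ℕ) :
    concatN U (n + 1) = Set.image2 (· ++ ·) U (concatN U n) := by
  ext σ
  constructor
  · rintro ⟨_ | ⟨a, l⟩, hl, hmem, rfl⟩
    · simp at hl
    · exact ⟨a, hmem a (by simp), l.flatten,
        ⟨l, by simpa using hl, fun τ hτ => hmem τ (by simp [hτ]), rfl⟩, rfl⟩
  · rintro ⟨a, ha, _, ⟨l, rfl, hl, rfl⟩, rfl⟩
    exact ⟨a :: l, rfl, by simpa using ⟨ha, hl⟩, rfl⟩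

lemma PrefixFree.concatN {U : Set (List Bool)} (hU : PrefixFree U) (n : ℕ) :
    PrefixFree (concatN U n) := by
  induction n with
  | zero =>
    rw [concatN_zero]
    rintro σ rfl τ rfl _
    rfl
  | succ n ih => rw [concatN_succ]; exact hU.image2_append ih

theorem stmt0 (μ : Measure (ℕ → Bool)) (hμ : IsUniform μ)
    (U : Set (List Bool)) (hU : PrefixFree U) (n : ℕ) :
    μ (opensOf (concatN U n)) = μ (opensOf U) ^ n := by
  rw [measure_opensOf_eq_kraftSum hμ (hU.concatN n), measure_opensOf_eq_kraftSum hμ hU]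
  induction n with
  | zero =>
    rw [concatN_zero, kraftSum, tsum_singleton [] fun σ => (1 / 2 : ℝ≥0∞) ^ σ.length]
    simp
  | succ n ih => rw [concatN_succ, kraftSum_image2_append hU, ih, pow_succ, mul_comm]
end

section
/- Let X ∈ 2^ω and let U ⊆ 2^{<ω} be a prefix-free set such that every tail of X (every sequence X(k)X(k+1)⋯ for k ∈ ℕ) belongs to the open set [U]. Then X ∈ U^ω, i.e., X is an infinite concatenation of elements of U. -/
open scoped ENNReal
open MeasureTheory Filter

def posAux (s : ℕ → List Bool) : ℕ → ℕ
  | 0 => 0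
  | n+1 => posAux s n + (s (posAux s n)).length

theorem stmt2 (X : ℕ → Bool) (U : Set (List Bool)) (hU : PrefixFree U)
    (h : ∀ k : ℕ, (fun n => X (n + k)) ∈ opensOf U) :
    X ∈ concatOmega U := by
  classical
  have pick : ∀ k, ∃ σ, σ ∈ U ∧ ∀ i : Fin σ.length, X (i + k) = σ.get i := by
    intro k
    obtain ⟨σ, hσU, hmem⟩ := Set.mem_iUnion₂.1 (h k)
    exact ⟨σ, hσU, hmem⟩
  choose s hsU hs using pick
  set pos := posAux s with hposdef
  set f : ℕ → List Bool := fun n => s (pos n) with hfdef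
  have key : ∀ n, (((List.range n).map f).flatten).length = pos n ∧
      ∀ i (hi : i < (((List.range n).map f).flatten).length),
        (((List.range n).map f).flatten)[i] = X i := by
    intro n
    induction n with
    | zero => simp [hposdef, posAux]
    | succ n ih =>
      have hlist : ((List.range (n+1)).map f).flatten
          = ((List.range n).map f).flatten ++ f n := by
        rw [List.range_succ, List.map_append, List.flatten_append]; simp
      have hlen : (((List.range (n+1)).map f).flatten).length
          = pos n + (s (pos n)).length := by
        rw [hlist, List.length_append, ih.1]
      refine ⟨by rw [hlen]; rfl, ?_⟩
      intro i hi
      rw [List.getElem_of_eq hlist]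
      by_cases hcase : i < (((List.range n).map f).flatten).length
      · rw [List.getElem_append_left hcase]
        exact ih.2 i hcase
      · push_neg at hcase
        rw [List.getElem_append_right hcase]
        have hlt : i - pos n < (s (pos n)).length := by
          rw [hlen] at hi
          have h1 := ih.1
          omega
        have := hs (pos n) ⟨i - pos n, hlt⟩
        simp only [ih.1]
        have heq : (i - pos n) + pos n = i := by
          have := ih.1 ▸ hcase
          omega
        exact (heq ▸ this).symm
  refine ⟨f, fun i => hsU _, fun n => ?_⟩
  intro i
  exact ((key n).2 i i.isLt).symm
end

section
/- Let U be an open subset of 2^ω with μ(U) < q for a rational 0 < q < 1. Define V = ⋃ {[σ] : μ(U ∩ [σ])/μ([σ]) > q}. Then μ(V) ≤ μ(U)/q < 1, and whenever μ(U ∩ [σ])/μ([σ]) = 1 we have [σ] ⊆ V. -/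
open scoped ENNReal
open MeasureTheory Filter

lemma cyl_anti {τ σ : List Bool} (h : τ <+: σ) : cyl σ ⊆ cyl τ := by
  obtain ⟨ρ, rfl⟩ := h
  intro X hX i
  have hi : (i : ℕ) < (τ ++ ρ).length := by
    simp only [List.length_append]; omega
  have := hX ⟨i, hi⟩
  simpa [List.getElem_append, i.isLt] using this

lemma cyl_comparable {σ τ : List Bool} {X : ℕ → Bool}
    (h1 : X ∈ cyl σ) (h2 : X ∈ cyl τ) : σ <+: τ ∨ τ <+: σ := by
  have key : ∀ σ τ : List Bool, σ.length ≤ τ.length → X ∈ cyl σ → X ∈ cyl τ → σ <+: τ := by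
    intro σ τ hlen h1 h2
    rw [List.prefix_iff_eq_take]
    apply List.ext_get
    · simp [hlen]
    intro n hn hn'
    have hnσ : n < σ.length := hn
    have hnτ : n < τ.length := lt_of_lt_of_le hnσ hlen
    have e1 := h1 ⟨n, hnσ⟩
    have e2 := h2 ⟨n, hnτ⟩
    simp only [List.get_eq_getElem] at e1 e2 ⊢
    rw [List.getElem_take]
    rw [← e1, ← e2]
  rcases le_total σ.length τ.length with h | h
  · exact Or.inl (key σ τ h h1 h2)
  · exact Or.inr (key τ σ h h2 h1)

lemma exists_minimal_prefix (P : List Bool → Prop) (σ : List Bool) (h : P σ) :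
    ∃ τ, τ <+: σ ∧ P τ ∧ ∀ ρ, ρ <+: τ → P ρ → ρ = τ := by
  classical
  have hex : ∃ n, ∃ τ, τ <+: σ ∧ τ.length = n ∧ P τ :=
    ⟨σ.length, σ, List.prefix_refl σ, rfl, h⟩
  obtain ⟨τ, hτσ, hlen, hPτ⟩ := Nat.find_spec hex
  refine ⟨τ, hτσ, hPτ, fun ρ hρτ hPρ => ?_⟩
  by_contra hne
  have hlt : ρ.length < τ.length := by
    rcases lt_or_eq_of_le hρτ.length_le with h' | h'
    · exact h'
    · exact absurd (hρτ.eq_of_length h') hne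
  exact Nat.find_min hex (m := ρ.length) (by omega) ⟨ρ, hρτ.trans hτσ, rfl, hPρ⟩

theorem stmt5 (μ : Measure (ℕ → Bool)) (hμ : IsUniform μ)
    (U : Set (ℕ → Bool)) (hopen : IsOpen U) (q : ℚ) (hq0 : 0 < q) (hq1 : q < 1)
    (hUq : μ U < ENNReal.ofReal (q : ℝ)) :
    μ (⋃ σ ∈ {σ : List Bool | ENNReal.ofReal (q : ℝ) < μ (U ∩ cyl σ) / μ (cyl σ)}, cyl σ)
        ≤ μ U / ENNReal.ofReal (q : ℝ)
    ∧ μ U / ENNReal.ofReal (q : ℝ) < 1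
    ∧ ∀ σ : List Bool, μ (U ∩ cyl σ) / μ (cyl σ) = 1 →
        cyl σ ⊆ ⋃ σ ∈ {σ : List Bool | ENNReal.ofReal (q : ℝ) < μ (U ∩ cyl σ) / μ (cyl σ)}, cyl σ := by
  set c : ℝ≥0∞ := ENNReal.ofReal (q : ℝ) with hc
  have hc0 : c ≠ 0 := by
    simp [hc, ENNReal.ofReal_pos]
    exact_mod_cast hq0
  have hc1 : c < 1 := by
    rw [hc]
    rw [ENNReal.ofReal_lt_one]
    exact_mod_cast hq1
  have hctop : c ≠ ⊤ := ENNReal.ofReal_ne_top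
  have hcyl0 : ∀ σ : List Bool, μ (cyl σ) ≠ 0 := by
    intro σ; rw [hμ]; exact pow_ne_zero _ (by norm_num)
  have hcyltop : ∀ σ : List Bool, μ (cyl σ) ≠ ⊤ := by
    intro σ; rw [hμ]
    exact ENNReal.pow_ne_top (by norm_num)
  set P : Set (List Bool) := {σ : List Bool | c < μ (U ∩ cyl σ) / μ (cyl σ)} with hP
  set S : Set (List Bool) := {σ | σ ∈ P ∧ ∀ ρ, ρ <+: σ → ρ ∈ P → ρ = σ} with hS
  -- the unions coincide
  have hUnion : (⋃ σ ∈ P, cyl σ) = ⋃ σ ∈ S, cyl σ := by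
    apply Set.Subset.antisymm
    · intro X hX
      simp only [Set.mem_iUnion] at hX ⊢
      obtain ⟨σ, hσ, hXσ⟩ := hX
      obtain ⟨τ, hτσ, hPτ, hmin⟩ := exists_minimal_prefix (· ∈ P) σ hσ
      exact ⟨τ, ⟨hPτ, hmin⟩, cyl_anti hτσ hXσ⟩
    · exact Set.iUnion₂_mono' fun σ hσ => ⟨σ, hσ.1, subset_rfl⟩
  -- S gives pairwise disjoint cylinders
  have hdisj : S.PairwiseDisjoint cyl := by
    intro σ hσ τ hτ hne
    show Disjoint (cyl σ) (cyl τ)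
    rw [Set.disjoint_left]
    intro X hXσ hXτ
    rcases cyl_comparable hXσ hXτ with h | h
    · exact hne (hτ.2 σ h hσ.1)
    · exact hne (hσ.2 τ h hτ.1).symm
  have hdisj' : S.PairwiseDisjoint (fun σ => U ∩ cyl σ) :=
    fun σ hσ τ hτ hne => Set.disjoint_of_subset Set.inter_subset_right
      Set.inter_subset_right (hdisj hσ hτ hne)
  have hScount : S.Countable := Set.to_countable S
  have hmeas : ∀ σ ∈ S, MeasurableSet (cyl σ) := fun σ _ => measurableSet_cyl σ
  have hkey : ∀ σ ∈ P, μ (cyl σ) ≤ μ (U ∩ cyl σ) / c := by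
    intro σ hσ
    rw [ENNReal.le_div_iff_mul_le (Or.inl hc0) (Or.inl hctop)]
    rw [mul_comm]
    have := (ENNReal.lt_div_iff_mul_lt (Or.inl (hcyl0 σ)) (Or.inl (hcyltop σ))).mp hσ
    exact this.le
  have hmain : μ (⋃ σ ∈ P, cyl σ) ≤ μ U / c := by
    rw [hUnion, measure_biUnion hScount hdisj hmeas]
    calc ∑' σ : S, μ (cyl σ.1)
        ≤ ∑' σ : S, μ (U ∩ cyl σ.1) / c :=
          ENNReal.tsum_le_tsum fun σ => hkey σ.1 σ.2.1
      _ = (∑' σ : S, μ (U ∩ cyl σ.1)) / c := by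
          simp only [div_eq_mul_inv, ENNReal.tsum_mul_right]
      _ = μ (⋃ σ ∈ S, U ∩ cyl σ) / c := by
          rw [measure_biUnion hScount hdisj'
            (fun σ _ => hopen.measurableSet.inter (measurableSet_cyl σ))]
      _ ≤ μ U / c := by
          gcongr
          exact Set.iUnion₂_subset fun σ _ => Set.inter_subset_left
  refine ⟨hmain, ?_, ?_⟩
  · rw [ENNReal.div_lt_iff (Or.inl hc0) (Or.inl hctop), one_mul]
    exact hUq
  · intro σ hσ
    apply Set.subset_biUnion_of_mem
    show c < μ (U ∩ cyl σ) / μ (cyl σ)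
    rw [hσ]
    exact hc1
end

section
/- Let d be a positive normed martingale, U its (d,q)-winning set for some q > 1. Define D inductively by D(ε)=1 and D(στ) = D(σ)·d(τι)/d(τ) where σ = ρτ with ρ a concatenation of strings in U and τ having no prefix in U (this decomposition is unique since U is prefix-free). Then D is a martingale, and if σ is a concatenation of k strings of U then D(σ) ≥ q^k. Consequently D succeeds on every X ∈ U^ω. -/
open scoped ENNReal
open MeasureTheory Filter

/-!
Reading σ bit by bit, keep track of the pending block τ (the part of σ after its longest
prefix in `U*`) and of the capital D σ. Each new bit b multiplies the capital by
d(τb)/d(τ), i.e. D bets like d started afresh on τ, so D is again a martingale; when τb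
enters U the block is closed and τ is reset to the empty string. Along a block τ ∈ U the
factors telescope to d(τ)/d(ε) ≥ q, so k completed blocks give capital at least q^k, and
an infinite concatenation of blocks closes arbitrarily many of them.
-/

section Restart

variable (d : List Bool → ℝ) (U : Set (List Bool))

open Classical in
noncomputable def restartStep (s : List Bool × ℝ) (b : Bool) : List Bool × ℝ :=
  (if s.1 ++ [b] ∈ U then [] else s.1 ++ [b], s.2 * d (s.1 ++ [b]) / d s.1)

/-- The pending block and the capital after reading a string. -/
noncomputable def restartRun (σ : List Bool) : List Bool × ℝ :=
  σ.foldl (restartStep d U) ([], 1)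

noncomputable def restartMartingale (σ : List Bool) : ℝ :=
  (restartRun d U σ).2

lemma restartRun_append (σ τ : List Bool) :
    restartRun d U (σ ++ τ) = τ.foldl (restartStep d U) (restartRun d U σ) :=
  List.foldl_append

lemma restartMartingale_append_singleton (σ : List Bool) (b : Bool) :
    restartMartingale d U (σ ++ [b]) =
      restartMartingale d U σ * d ((restartRun d U σ).1 ++ [b]) / d (restartRun d U σ).1 := by
  simp [restartMartingale, restartRun_append, restartStep]

variable {d}

lemma restartMartingale_nonneg (hd : ∀ σ, 0 ≤ d σ) (σ : List Bool) :
    0 ≤ restartMartingale d U σ := by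
  induction σ using List.reverseRecOn with
  | nil => exact zero_le_one
  | append_singleton σ b ih =>
    rw [restartMartingale_append_singleton]
    exact div_nonneg (mul_nonneg ih (hd _)) (hd _)

lemma isMartingale_restartMartingale (hd : IsMartingale d) (hpos : ∀ σ, 0 < d σ) :
    IsMartingale (restartMartingale d U) := by
  refine ⟨restartMartingale_nonneg U hd.1, fun σ => ?_⟩
  rw [restartMartingale_append_singleton, restartMartingale_append_singleton]
  generalize (restartRun d U σ).1 = τ
  have hsum : d (τ ++ [false]) + d (τ ++ [true]) = 2 * d τ := by linarith [hd.2 τ]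
  rw [← add_div, ← mul_add, hsum]
  field_simp [(hpos τ).ne']

lemma foldl_restartStep_of_forall_prefix_not_mem (hpos : ∀ σ, 0 < d σ) (v : ℝ)
    {τ : List Bool} (hτ : ∀ p, p <+: τ → p ∉ U) :
    τ.foldl (restartStep d U) ([], v) = (τ, v * d τ / d []) := by
  induction τ using List.reverseRecOn with
  | nil => simp [(hpos []).ne']
  | append_singleton τ b ih =>
    rw [List.foldl_append, ih fun p hp => hτ p (hp.trans (List.prefix_append _ _))]
    have hτb : τ ++ [b] ∉ U := hτ _ List.prefix_rfl
    simp only [restartStep, if_neg hτb, List.foldl_cons, List.foldl_nil]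
    field_simp [(hpos τ).ne']

lemma restartRun_append_of_mem (hpos : ∀ σ, 0 < d σ) (hU : PrefixFree U) (hnil : [] ∉ U)
    {σ τ : List Bool} (hσ : (restartRun d U σ).1 = []) (hτ : τ ∈ U) :
    restartRun d U (σ ++ τ) = ([], restartMartingale d U σ * d τ / d []) := by
  obtain ⟨τ, b, rfl⟩ := (List.eq_nil_or_concat τ).resolve_left (ne_of_mem_of_not_mem hτ hnil)
  rw [List.concat_eq_append] at hτ ⊢
  have hproper : ∀ p, p <+: τ → p ∉ U := by
    rintro p hp hpU
    obtain rfl := hU p hpU _ hτ (hp.trans (List.prefix_append _ _))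
    simpa using hp.length_le
  have hrun : restartRun d U σ = ([], restartMartingale d U σ) := Prod.ext hσ rfl
  rw [← List.append_assoc, restartRun_append, restartRun_append, hrun,
    foldl_restartStep_of_forall_prefix_not_mem U hpos _ hproper]
  simp only [restartStep, if_pos hτ, List.foldl_cons, List.foldl_nil, restartMartingale]
  field_simp [(hpos τ).ne', (hpos []).ne']

lemma restartRun_flatten (hpos : ∀ σ, 0 < d σ) (hU : PrefixFree U) (hnil : [] ∉ U)
    {l : List (List Bool)} (hl : ∀ τ ∈ l, τ ∈ U) :
    restartRun d U l.flatten = ([], (l.map fun τ => d τ / d []).prod) := by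
  induction l using List.reverseRecOn with
  | nil => rfl
  | append_singleton l τ ih =>
    have hl' : ∀ τ ∈ l, τ ∈ U := fun τ' hτ' => hl τ' (by simp [hτ'])
    rw [List.flatten_append, List.flatten_singleton,
      restartRun_append_of_mem U hpos hU hnil (by rw [ih hl']) (hl τ (by simp)),
      restartMartingale, ih hl']
    simp [mul_div_assoc]

lemma pow_le_restartMartingale_of_mem_concatN (hpos : ∀ σ, 0 < d σ) (hU : PrefixFree U)
    (hnil : [] ∉ U) {q : ℝ} (hq : 0 ≤ q) (hqU : ∀ τ ∈ U, q ≤ d τ / d []) {k : ℕ}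
    {σ : List Bool} (hσ : σ ∈ concatN U k) : q ^ k ≤ restartMartingale d U σ := by
  obtain ⟨l, rfl, hl, rfl⟩ := hσ
  rw [restartMartingale, restartRun_flatten U hpos hU hnil hl]
  simpa [List.map_const', List.prod_replicate] using
    List.prod_map_le_prod_map₀ (fun _ => q) _ (fun _ _ => hq) fun τ hτ => hqU τ (hl τ hτ)

end Restart

lemma winningSet_prefixFree (d : List Bool → ℝ) (q : ℝ) : PrefixFree (winningSet d q) :=
  fun σ hσ _ hτ hστ => by_contra fun hne => (hτ.2 σ hστ hne).not_ge hσ.1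

lemma nil_not_mem_winningSet {d : List Bool → ℝ} {q : ℝ} (h : d [] < q) :
    [] ∉ winningSet d q :=
  fun hnil => h.not_ge hnil.1

lemma length_le_length_flatten {α : Type*} {l : List (List α)} (hl : ∀ τ ∈ l, τ ≠ []) :
    l.length ≤ l.flatten.length := by
  rw [List.length_flatten, ← List.length_map (f := List.length)]
  refine List.length_le_sum_of_one_le _ fun n hn => ?_
  obtain ⟨τ, hτ, rfl⟩ := List.mem_map.1 hn
  exact List.length_pos_iff.2 (hl τ hτ)

lemma seqTake_length_of_prefixOfSeq {σ : List Bool} {X : ℕ → Bool} (h : prefixOfSeq σ X) :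
    seqTake X σ.length = σ :=
  List.ext_get (by simp [seqTake]) fun n _ hn => by simpa [seqTake] using h ⟨n, hn⟩

lemma succeeds_of_pow_le_of_mem_concatN {D : List Bool → ℝ} {U : Set (List Bool)} {q : ℝ}
    (hq : 1 < q) (hnil : [] ∉ U) (hD : ∀ k σ, σ ∈ concatN U k → q ^ k ≤ D σ)
    {X : ℕ → Bool} (hX : X ∈ concatOmega U) : Succeeds D X := by
  obtain ⟨f, hf, hpre⟩ := hX
  intro C m
  obtain ⟨N, hN⟩ := pow_unbounded_of_one_lt C hq
  set l := (List.range (max m N)).map f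
  have hl : ∀ τ ∈ l, τ ∈ U := by
    simp only [l, List.mem_map]
    rintro _ ⟨i, -, rfl⟩
    exact hf i
  have hlength : max m N ≤ l.flatten.length := by
    simpa [l] using length_le_length_flatten fun τ hτ => ne_of_mem_of_not_mem (hl τ hτ) hnil
  refine ⟨l.flatten.length, (le_max_left m N).trans hlength, ?_⟩
  rw [seqTake_length_of_prefixOfSeq (hpre _)]
  calc C ≤ q ^ N := hN.le
    _ ≤ q ^ max m N := pow_le_pow_right₀ hq.le (le_max_right m N)
    _ ≤ D l.flatten := hD _ _ ⟨l, by simp [l], hl, rfl⟩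

theorem stmt8 (d : List Bool → ℝ) (hd : IsMartingale d) (hpos : ∀ σ, 0 < d σ)
    (hnorm : d [] = 1) (q : ℝ) (hq : 1 < q) :
    ∃ D : List Bool → ℝ, IsMartingale D ∧ D [] = 1 ∧
      (∀ (k : ℕ) (σ : List Bool), σ ∈ concatN (winningSet d q) k → q ^ k ≤ D σ) ∧
      ∀ X ∈ concatOmega (winningSet d q), Succeeds D X := by
  have hnil : [] ∉ winningSet d q := nil_not_mem_winningSet (hnorm ▸ hq)
  have hbound : ∀ (k : ℕ) (σ : List Bool), σ ∈ concatN (winningSet d q) k →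
      q ^ k ≤ restartMartingale d (winningSet d q) σ := fun k σ =>
    pow_le_restartMartingale_of_mem_concatN _ hpos (winningSet_prefixFree d q) hnil
      (by linarith) fun τ hτ => by simpa [hnorm] using hτ.1
  exact ⟨restartMartingale d (winningSet d q), isMartingale_restartMartingale _ hd hpos, rfl,
    hbound, fun X => succeeds_of_pow_le_of_mem_concatN hq hnil hbound⟩
end

section
/- If d succeeds on a tail Y of X (where X = σY), then the translated martingale d_σ defined by d_σ(τ) = d(στ) succeeds on Y; moreover, given a positive martingale d, the function D(τ) = Σ_{σ∈2^{<ω}} 2^{-2|σ|-1} · d_σ(τ)/d_σ(ε) is a well-defined normed martingale that succeeds against every tail of any sequence on which d succeeds. -/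
open scoped ENNReal
open MeasureTheory Filter

/-!
The martingale `D` dominates every normalized translate `τ ↦ d (σ ++ τ) / d σ` up to the
positive factor `2 ^ (-2|σ|-1)`. If `d` succeeds on `X = σ Y`, the translate by `σ` succeeds
on `Y`, hence so does `D`. The series defining `D` converges because a martingale grows by at
most a factor `2` per bit, so the `σ`-th term is at most `2 ^ |τ| * 2 ^ (-2|σ|-1)`, and there are
`2 ^ n` words of length `n`, so these weights sum to `∑ₙ 2 ^ (-n-1) = 1`.
-/

@[simp]
lemma length_seqTake (X : ℕ → Bool) (n : ℕ) : (seqTake X n).length = n :=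
  List.length_ofFn

lemma seqTake_add (X : ℕ → Bool) (k n : ℕ) :
    seqTake X (k + n) = seqTake X k ++ seqTake (fun i => X (i + k)) n := by
  simp only [seqTake, List.ofFn_add]
  congr 2
  funext j
  simp only [Fin.val_natAdd]
  rw [Nat.add_comm]

lemma seqAppend_seqTake_shift (X : ℕ → Bool) (k : ℕ) :
    seqAppend (seqTake X k) (fun n => X (n + k)) = X := by
  funext n
  by_cases hn : n < k
  · simp [seqAppend, seqTake, hn]
  · simp only [seqAppend, length_seqTake, dif_neg hn]
    congr 1
    omega

lemma seqTake_seqAppend_add (σ : List Bool) (Y : ℕ → Bool) (n : ℕ) :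
    seqTake (seqAppend σ Y) (σ.length + n) = σ ++ seqTake Y n := by
  rw [seqTake_add]
  congr 1
  · conv_rhs => rw [← List.ofFn_get σ]
    simp only [seqTake, seqAppend]
    congr 1
    funext i
    rw [dif_pos i.isLt]
  · congr 1
    funext i
    simp only [seqAppend, dif_neg (Nat.not_lt.mpr (Nat.le_add_left σ.length i))]
    congr 1
    omega

section Succeeds

variable {d e : List Bool → ℝ}

lemma Succeeds.translate {σ : List Bool} {Y : ℕ → Bool} (h : Succeeds d (seqAppend σ Y)) :
    Succeeds (fun τ => d (σ ++ τ)) Y := by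
  intro C m
  obtain ⟨n, hn, hC⟩ := h C (σ.length + m)
  obtain ⟨j, rfl⟩ := Nat.exists_eq_add_of_le (hn.trans' (Nat.le_add_right _ _))
  exact ⟨j, by omega, by rwa [seqTake_seqAppend_add] at hC⟩

lemma Succeeds.of_const_mul_le {X : ℕ → Bool} {c : ℝ} (hc : 0 < c)
    (hle : ∀ τ, c * d τ ≤ e τ) (h : Succeeds d X) : Succeeds e X := by
  intro C m
  obtain ⟨n, hn, hC⟩ := h (C / c) m
  exact ⟨n, hn, ((div_le_iff₀' hc).mp hC).trans (hle _)⟩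

end Succeeds

namespace IsMartingale

variable {d : List Bool → ℝ}

lemma translate (h : IsMartingale d) (σ : List Bool) : IsMartingale fun τ => d (σ ++ τ) :=
  ⟨fun τ => h.1 _, fun τ => by simpa only [List.append_assoc] using h.2 (σ ++ τ)⟩

lemma const_mul (h : IsMartingale d) {c : ℝ} (hc : 0 ≤ c) : IsMartingale fun τ => c * d τ :=
  ⟨fun τ => mul_nonneg hc (h.1 τ), fun τ => by
    show c * d τ = (c * d (τ ++ [false]) + c * d (τ ++ [true])) / 2
    rw [h.2 τ]; ring⟩

lemma div_const (h : IsMartingale d) {c : ℝ} (hc : 0 ≤ c) : IsMartingale fun τ => d τ / c := by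
  simpa only [div_eq_inv_mul] using h.const_mul (inv_nonneg.mpr hc)

lemma append_singleton_le (h : IsMartingale d) (σ : List Bool) (b : Bool) :
    d (σ ++ [b]) ≤ 2 * d σ := by
  have := h.2 σ
  have := h.1 (σ ++ [false])
  have := h.1 (σ ++ [true])
  cases b <;> linarith

lemma append_le_two_pow_length_mul (h : IsMartingale d) (σ τ : List Bool) :
    d (σ ++ τ) ≤ 2 ^ τ.length * d σ := by
  induction τ using List.reverseRecOn with
  | nil => simp
  | append_singleton τ b ih =>
    calc d (σ ++ (τ ++ [b])) ≤ 2 * d (σ ++ τ) := by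
          rw [← List.append_assoc]; exact h.append_singleton_le _ b
      _ ≤ 2 * (2 ^ τ.length * d σ) := by gcongr
      _ = 2 ^ (τ ++ [b]).length * d σ := by
          rw [List.length_append, List.length_singleton, pow_succ]; ring

lemma tsum {ι : Type*} {M : ι → List Bool → ℝ} (hM : ∀ i, IsMartingale (M i))
    (hs : ∀ τ, Summable fun i => M i τ) : IsMartingale fun τ => ∑' i, M i τ := by
  refine ⟨fun τ => tsum_nonneg fun i => (hM i).1 τ, fun τ => ?_⟩
  rw [← (hs _).tsum_add (hs _), ← tsum_div_const]
  exact tsum_congr fun i => (hM i).2 τ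

end IsMartingale

lemma hasSum_length_of_nonneg {α : Type*} [Fintype α] {f : ℕ → ℝ} {a : ℝ}
    (hf : ∀ n, 0 ≤ f n) (h : HasSum (fun n => (Fintype.card α : ℝ) ^ n * f n) a) :
    HasSum (fun l : List α => f l.length) a := by
  rw [← List.equivSigmaTuple.symm.hasSum_iff,
    show (fun l : List α => f l.length) ∘ List.equivSigmaTuple.symm = fun p => f p.1 from
      funext fun ⟨n, g⟩ => by simp [List.equivSigmaTuple]]
  have hfib : ∀ n, HasSum (fun _ : Fin n → α => f n) ((Fintype.card α : ℝ) ^ n * f n) := by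
    intro n
    convert hasSum_fintype (fun _ : Fin n → α => f n) using 1
    simp [Finset.sum_const, Finset.card_univ]
  have hsum : Summable fun p : (Σ n, Fin n → α) => f p.1 :=
    (summable_sigma_of_nonneg fun p => hf p.1).mpr
      ⟨fun n => (hfib n).summable, h.summable.congr fun n => (hfib n).tsum_eq.symm⟩
  exact h.sigma_of_hasSum hfib hsum

lemma hasSum_half_pow_two_mul_length_add_one :
    HasSum (fun σ : List Bool => (1 / 2 : ℝ) ^ (2 * σ.length + 1)) 1 := by
  refine hasSum_length_of_nonneg (f := fun n => (1 / 2 : ℝ) ^ (2 * n + 1))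
    (fun n => by positivity) ?_
  convert hasSum_geometric_two' (1 : ℝ) using 1
  funext n
  rw [Fintype.card_bool, pow_succ, pow_mul]
  field_simp
  rw [← mul_pow, ← mul_pow]
  norm_num

/-- The paper's `D`: a weighted sum of the normalized translates of `d`. -/
noncomputable def tailMartingale (d : List Bool → ℝ) (τ : List Bool) : ℝ :=
  ∑' σ : List Bool, (1 / 2 : ℝ) ^ (2 * σ.length + 1) * (d (σ ++ τ) / d σ)

section TailMartingale

variable {d : List Bool → ℝ}

lemma IsMartingale.summable_tailMartingale (h : IsMartingale d) (τ : List Bool) :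
    Summable fun σ : List Bool => (1 / 2 : ℝ) ^ (2 * σ.length + 1) * (d (σ ++ τ) / d σ) := by
  refine Summable.of_nonneg_of_le (fun σ => mul_nonneg (by positivity) ?_) (fun σ => ?_)
    (hasSum_half_pow_two_mul_length_add_one.summable.mul_left (2 ^ τ.length))
  · exact div_nonneg (h.1 _) (h.1 _)
  · rw [mul_comm (2 ^ τ.length : ℝ)]
    gcongr
    exact div_le_of_le_mul₀ (h.1 σ) (by positivity) (h.append_le_two_pow_length_mul σ τ)

lemma IsMartingale.tailMartingale (h : IsMartingale d) : IsMartingale (tailMartingale d) :=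
  IsMartingale.tsum (fun σ => ((h.translate σ).div_const (h.1 σ)).const_mul (by positivity))
    h.summable_tailMartingale

lemma tailMartingale_nil (hpos : ∀ σ, 0 < d σ) : tailMartingale d [] = 1 := by
  simp only [tailMartingale, List.append_nil, div_self (hpos _).ne', mul_one]
  exact hasSum_half_pow_two_mul_length_add_one.tsum_eq

lemma Succeeds.tailMartingale_tail (h : IsMartingale d) (hpos : ∀ σ, 0 < d σ)
    {X : ℕ → Bool} (hX : Succeeds d X) (k : ℕ) :
    Succeeds (tailMartingale d) (fun n => X (n + k)) := by
  set σ := seqTake X k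
  rw [← seqAppend_seqTake_shift X k] at hX
  refine hX.translate.of_const_mul_le (c := (1 / 2 : ℝ) ^ (2 * σ.length + 1) / d σ)
    (div_pos (by positivity) (hpos σ)) fun τ => ?_
  calc (1 / 2 : ℝ) ^ (2 * σ.length + 1) / d σ * d (σ ++ τ)
      = (1 / 2 : ℝ) ^ (2 * σ.length + 1) * (d (σ ++ τ) / d σ) := by ring
    _ ≤ tailMartingale d τ :=
        (h.summable_tailMartingale τ).le_tsum σ fun σ' _ =>
          mul_nonneg (by positivity) (div_nonneg (h.1 _) (h.1 _))

end TailMartingale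

theorem stmt9 (d : List Bool → ℝ)
    (hd : ∀ σ, d σ = (d (σ ++ [false]) + d (σ ++ [true])) / 2)
    (hpos : ∀ σ, 0 < d σ) :
    (∀ (σ : List Bool) (Y : ℕ → Bool),
        Succeeds d (seqAppend σ Y) → Succeeds (fun τ => d (σ ++ τ)) Y)
    ∧ ∀ D : List Bool → ℝ,
        (∀ τ, D τ = ∑' σ : List Bool, (1 / 2 : ℝ) ^ (2 * σ.length + 1) * (d (σ ++ τ) / d σ)) →
        (∀ τ, Summable fun σ : List Bool =>
            (1 / 2 : ℝ) ^ (2 * σ.length + 1) * (d (σ ++ τ) / d σ))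
        ∧ D [] = 1
        ∧ IsMartingale D
        ∧ ∀ X : ℕ → Bool, Succeeds d X → ∀ k : ℕ, Succeeds D (fun n => X (n + k)) := by
  have hmart : IsMartingale d := ⟨fun σ => (hpos σ).le, hd⟩
  refine ⟨fun σ Y h => h.translate, fun D hD => ?_⟩
  obtain rfl : D = tailMartingale d := funext hD
  exact ⟨hmart.summable_tailMartingale, tailMartingale_nil hpos, hmart.tailMartingale,
    fun X hX k => hX.tailMartingale_tail hmart hpos k⟩
end

section
/- Let (V_n) be a sequence of open sets in 2^ω with μ(V_n) ≤ 2^{-n}, and suppose every tail of X belongs to ⋂_n V_n. Then the set U = ⋃_{k∈ℕ} ⋃_{|σ|=k} (V_{3k+2} | σ) is an open set of measure at most 1/2 containing all tails of X, where (V | σ) = {Z : σZ ∈ V}. -/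
open scoped ENNReal
open MeasureTheory Filter

def condSet (V : Set (ℕ → Bool)) (σ : List Bool) : Set (ℕ → Bool) :=
  {Z | seqAppend σ Z ∈ V}

namespace Aux

lemma seqAppend_nil (Z : ℕ → Bool) : seqAppend [] Z = Z := by
  funext n; simp [seqAppend]

lemma continuous_seqAppend (σ : List Bool) : Continuous (seqAppend σ) := by
  apply continuous_pi
  intro n
  by_cases h : n < σ.length
  · simp only [seqAppend, dif_pos h]; exact continuous_const
  · simp only [seqAppend, dif_neg h]; exact continuous_apply _

lemma measurable_seqAppend (σ : List Bool) : Measurable (seqAppend σ) :=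
  (continuous_seqAppend σ).measurable

lemma mem_cyl {σ : List Bool} {X : ℕ → Bool} :
    X ∈ cyl σ ↔ ∀ i : Fin σ.length, X i = σ.get i := Iff.rfl

lemma cyl_nil : cyl [] = Set.univ := by
  ext X; simp [cyl]

lemma cyl_subset_of_prefix {σ τ : List Bool} (h : σ <+: τ) : cyl τ ⊆ cyl σ := by
  intro X hX i
  have hlen : σ.length ≤ τ.length := h.length_le
  have : X i = τ.get ⟨i, lt_of_lt_of_le i.2 hlen⟩ := hX ⟨i, lt_of_lt_of_le i.2 hlen⟩
  rw [this]
  simp only [List.get_eq_getElem]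
  exact (List.IsPrefix.getElem h i.2).symm ▸ rfl

lemma comparable_of_mem {σ τ : List Bool} {X : ℕ → Bool} (hσ : X ∈ cyl σ) (hτ : X ∈ cyl τ) :
    σ <+: τ ∨ τ <+: σ := by
  rcases le_total σ.length τ.length with hl | hl
  · left
    have : σ = τ.take σ.length := by
      apply List.ext_getElem (by simp [hl])
      intro i h1 h2
      have := hσ ⟨i, h1⟩
      have := hτ ⟨i, lt_of_lt_of_le h1 hl⟩
      simp_all [cyl]
    exact this ▸ List.take_prefix _ _
  · right
    have : τ = σ.take τ.length := by
      apply List.ext_getElem (by simp [hl])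
      intro i h1 h2
      have := hτ ⟨i, h1⟩
      have := hσ ⟨i, lt_of_lt_of_le h1 hl⟩
      simp_all [cyl]
    exact this ▸ List.take_prefix _ _

lemma measurableSet_cyl (σ : List Bool) : MeasurableSet (cyl σ) := by
  have : cyl σ = ⋂ i : Fin σ.length, {X : ℕ → Bool | X i = σ.get i} := by
    ext X; simp [cyl]
  rw [this]
  exact MeasurableSet.iInter fun i =>
    (measurable_pi_apply (i : ℕ)) (MeasurableSet.singleton _)

lemma isPiSystem_cyl : IsPiSystem {s : Set (ℕ → Bool) | ∃ σ, s = cyl σ} := by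
  rintro s ⟨σ, rfl⟩ t ⟨τ, rfl⟩ ⟨X, hXσ, hXτ⟩
  rcases comparable_of_mem hXσ hXτ with h | h
  · exact ⟨τ, by rw [Set.inter_eq_right.2 (cyl_subset_of_prefix h)]⟩
  · exact ⟨σ, by rw [Set.inter_eq_left.2 (cyl_subset_of_prefix h)]⟩

lemma generateFrom_cyl :
    (inferInstance : MeasurableSpace (ℕ → Bool)) =
      MeasurableSpace.generateFrom {s : Set (ℕ → Bool) | ∃ σ, s = cyl σ} := by
  apply le_antisymm
  · rw [MeasurableSpace.pi_eq_generateFrom_projections]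
    apply MeasurableSpace.generateFrom_le
    rintro t ⟨i, A, -, rfl⟩
    have : Function.eval i ⁻¹' A =
        ⋃ (l : List Bool) (_ : ∃ h : l.length = i + 1, l.get ⟨i, by omega⟩ ∈ A), cyl l := by
      ext X
      simp only [Set.mem_preimage, Set.mem_iUnion]
      constructor
      · intro hX
        refine ⟨List.ofFn (fun j : Fin (i+1) => X j), ⟨by simp, ?_⟩, ?_⟩
        · simp only [List.get_eq_getElem, List.getElem_ofFn]
          exact hX
        · intro j
          simp only [List.get_eq_getElem, List.getElem_ofFn]
      · rintro ⟨l, ⟨hl, hmem⟩, hX⟩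
        have := hX ⟨i, by omega⟩
        simp only [Function.eval]
        rw [this]
        exact hmem
    rw [this]
    exact MeasurableSet.biUnion (Set.to_countable _)
      fun l _ => MeasurableSpace.measurableSet_generateFrom ⟨l, rfl⟩
  · intro s hs
    induction hs with
    | basic u hu => obtain ⟨σ, rfl⟩ := hu; exact measurableSet_cyl σ
    | empty => exact MeasurableSet.empty
    | compl t _ ih => exact ih.compl
    | iUnion f _ ih => exact MeasurableSet.iUnion ih

lemma preimage_cyl_of_prefix {τ σ : List Bool} (h : τ <+: σ) :
    seqAppend σ ⁻¹' cyl τ = Set.univ := by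
  ext Z
  simp only [Set.mem_preimage, Set.mem_univ, iff_true]
  intro i
  have hi : (i : ℕ) < σ.length := lt_of_lt_of_le i.2 h.length_le
  show seqAppend σ Z i = _
  simp only [seqAppend, dif_pos hi, List.get_eq_getElem]
  exact (List.IsPrefix.getElem h i.2).symm

lemma preimage_cyl_of_prefix' {σ τ : List Bool} (h : σ <+: τ) :
    seqAppend σ ⁻¹' cyl τ = cyl (τ.drop σ.length) := by
  obtain ⟨ρ, rfl⟩ := h
  ext Z
  simp only [Set.mem_preimage, List.drop_left]
  constructor
  · intro hZ i
    have hi : σ.length + (i : ℕ) < (σ ++ ρ).length := by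
      simp only [List.length_append]; omega
    have := hZ ⟨σ.length + i, hi⟩
    simp only [List.get_eq_getElem] at this ⊢
    rw [List.getElem_append_right (by omega)] at this
    simp only [seqAppend] at this
    rw [dif_neg (by omega)] at this
    simpa using this
  · intro hZ i
    show seqAppend σ Z i = _
    by_cases hi : (i : ℕ) < σ.length
    · simp only [seqAppend, dif_pos hi, List.get_eq_getElem]
      rw [List.getElem_append_left hi]
    · simp only [seqAppend, dif_neg hi, List.get_eq_getElem]
      have hρ : (i : ℕ) - σ.length < ρ.length := by
        have := i.2; simp only [List.length_append] at this; omega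
      have := hZ ⟨(i : ℕ) - σ.length, hρ⟩
      simp only [List.get_eq_getElem] at this
      rw [List.getElem_append_right (by omega)]
      exact this

lemma preimage_cyl_of_none {σ τ : List Bool} (h1 : ¬ τ <+: σ) (h2 : ¬ σ <+: τ) :
    seqAppend σ ⁻¹' cyl τ = ∅ := by
  ext Z
  simp only [Set.mem_preimage, Set.mem_empty_iff_false, iff_false]
  intro hZ
  have hσ : seqAppend σ Z ∈ cyl σ := by
    intro i
    simp [seqAppend, i.2]
  rcases comparable_of_mem hσ hZ with h | h
  · exact h2 h
  · exact h1 h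

lemma two_mul_half : (2:ℝ≥0∞) * (1/2) = 1 := by
  rw [one_div]
  exact ENNReal.mul_inv_cancel two_ne_zero ENNReal.ofNat_ne_top

lemma two_pow_mul_half_pow {a b : ℕ} (h : a ≤ b) :
    (2:ℝ≥0∞)^a * (1/2)^b = (1/2)^(b-a) :=
  calc (2:ℝ≥0∞)^a * (1/2)^b = 2^a * ((1/2)^a * (1/2)^(b-a)) := by
        rw [← pow_add, Nat.add_sub_cancel' h]
  _ = (2^a * (1/2)^a) * (1/2)^(b-a) := by ring
  _ = (1/2)^(b-a) := by rw [← mul_pow, two_mul_half, one_pow, one_mul]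

lemma cyl_inter_empty {σ τ : List Bool} (h1 : ¬ τ <+: σ) (h2 : ¬ σ <+: τ) :
    cyl τ ∩ cyl σ = ∅ := by
  ext X
  simp only [Set.mem_inter_iff, Set.mem_empty_iff_false, iff_false, not_and]
  intro h3 h4
  rcases comparable_of_mem h4 h3 with h | h
  · exact h2 h
  · exact h1 h

lemma map_seqAppend (μ : Measure (ℕ → Bool)) (hμ : IsUniform μ) (σ : List Bool) :
    μ.map (seqAppend σ) = ((2:ℝ≥0∞)^σ.length) • μ.restrict (cyl σ) := by
  have huniv : μ Set.univ = 1 := by rw [← cyl_nil, hμ]; simp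
  haveI : IsFiniteMeasure μ := ⟨by simp [huniv]⟩
  apply ext_of_generate_finite _ generateFrom_cyl isPiSystem_cyl
  · rintro s ⟨τ, rfl⟩
    rw [Measure.map_apply (measurable_seqAppend σ) (measurableSet_cyl τ),
      Measure.smul_apply, Measure.restrict_apply (measurableSet_cyl τ), smul_eq_mul]
    by_cases h1 : τ <+: σ
    · rw [preimage_cyl_of_prefix h1, huniv,
        Set.inter_eq_right.2 (cyl_subset_of_prefix h1), hμ,
        two_pow_mul_half_pow (le_refl σ.length)]
      simp
    · by_cases h2 : σ <+: τ
      · rw [preimage_cyl_of_prefix' h2, hμ,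
          Set.inter_eq_left.2 (cyl_subset_of_prefix h2), hμ,
          two_pow_mul_half_pow h2.length_le, List.length_drop]
      · rw [preimage_cyl_of_none h1 h2, cyl_inter_empty h1 h2]
        simp
  · rw [Measure.map_apply (measurable_seqAppend σ) MeasurableSet.univ,
      Set.preimage_univ, huniv, Measure.smul_apply,
      Measure.restrict_apply MeasurableSet.univ, Set.univ_inter, hμ, smul_eq_mul,
      two_pow_mul_half_pow (le_refl σ.length)]
    simp

lemma measure_condSet_le (μ : Measure (ℕ → Bool)) (hμ : IsUniform μ)
    {V : Set (ℕ → Bool)} (hV : MeasurableSet V) (σ : List Bool) :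
    μ (condSet V σ) ≤ (2:ℝ≥0∞)^σ.length * μ V := by
  have : condSet V σ = seqAppend σ ⁻¹' V := rfl
  rw [this, ← Measure.map_apply (measurable_seqAppend σ) hV, map_seqAppend μ hμ σ,
    Measure.smul_apply, Measure.restrict_apply hV, smul_eq_mul]
  exact mul_le_mul_right (measure_mono Set.inter_subset_left) _

lemma tsum_lists : ∑' σ : List Bool, ((1:ℝ≥0∞)/2)^(2*σ.length+2) = 1/2 := by
  rw [← (Equiv.sigmaFiberEquiv (List.length : List Bool → ℕ)).tsum_eq
    (fun σ : List Bool => ((1:ℝ≥0∞)/2)^(2*σ.length+2)), ENNReal.tsum_sigma']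
  have hfib : ∀ k : ℕ, ∑' x : {l : List Bool // l.length = k},
      ((1:ℝ≥0∞)/2)^(2*(x : List Bool).length+2) = 2^k * (1/2)^(2*k+2) := by
    intro k
    haveI : Fintype {l : List Bool // l.length = k} :=
      inferInstanceAs (Fintype (List.Vector Bool k))
    rw [tsum_fintype]
    have hcard : Fintype.card {l : List Bool // l.length = k} = 2 ^ k := by
      rw [Fintype.card_congr
        (show {l : List Bool // l.length = k} ≃ List.Vector Bool k from Equiv.refl _),
        card_vector]
      simp
    calc ∑ x : {l : List Bool // l.length = k}, ((1:ℝ≥0∞)/2)^(2*(x : List Bool).length+2)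
        = ∑ _x : {l : List Bool // l.length = k}, ((1:ℝ≥0∞)/2)^(2*k+2) := by
          apply Finset.sum_congr rfl; intro x _; rw [x.2]
      _ = (Fintype.card {l : List Bool // l.length = k}) * ((1:ℝ≥0∞)/2)^(2*k+2) := by
          rw [Finset.sum_const, Finset.card_univ, nsmul_eq_mul]
      _ = 2^k * (1/2)^(2*k+2) := by rw [hcard]; push_cast; ring
  calc ∑' (k : ℕ) (x : {l : List Bool // l.length = k}),
        ((1:ℝ≥0∞)/2)^(2*((Equiv.sigmaFiberEquiv (List.length : List Bool → ℕ)) ⟨k, x⟩).length+2)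
      = ∑' (k : ℕ), 2^k * ((1:ℝ≥0∞)/2)^(2*k+2) := by
        apply tsum_congr; intro k
        rw [← hfib k]
        apply tsum_congr; intro x
        rfl
    _ = ∑' (k : ℕ), ((1:ℝ≥0∞)/2)^(k+2) := by
        apply tsum_congr; intro k
        rw [two_pow_mul_half_pow (by omega)]
        congr 1; omega
    _ = ((1:ℝ≥0∞)/2)^2 * ∑' (k : ℕ), ((1:ℝ≥0∞)/2)^k := by
        rw [← ENNReal.tsum_mul_left]
        apply tsum_congr; intro k; rw [← pow_add]; congr 1; omega
    _ = 1/2 := by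
        rw [ENNReal.tsum_geometric, one_div, ENNReal.one_sub_inv_two, inv_inv, sq,
          mul_assoc, ENNReal.inv_mul_cancel two_ne_zero ENNReal.ofNat_ne_top, mul_one]
end Aux

theorem stmt11 (μ : Measure (ℕ → Bool)) (hμ : IsUniform μ)
    (V : ℕ → Set (ℕ → Bool)) (hopen : ∀ n, IsOpen (V n))
    (hmeas : ∀ n, μ (V n) ≤ (1 / 2 : ℝ≥0∞) ^ n) (X : ℕ → Bool)
    (hX : ∀ k : ℕ, (fun n => X (n + k)) ∈ ⋂ n : ℕ, V n) :
    IsOpen (⋃ σ : List Bool, condSet (V (3 * σ.length + 2)) σ)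
    ∧ μ (⋃ σ : List Bool, condSet (V (3 * σ.length + 2)) σ) ≤ 1 / 2
    ∧ ∀ k : ℕ, (fun n => X (n + k)) ∈ ⋃ σ : List Bool, condSet (V (3 * σ.length + 2)) σ := by
  have hVmeas : ∀ n, MeasurableSet (V n) := fun n => (hopen n).measurableSet
  refine ⟨?_, ?_, ?_⟩
  · exact isOpen_iUnion fun σ =>
      (Aux.continuous_seqAppend σ).isOpen_preimage _ (hopen _)
  · calc μ (⋃ σ : List Bool, condSet (V (3 * σ.length + 2)) σ)
        ≤ ∑' σ : List Bool, μ (condSet (V (3 * σ.length + 2)) σ) := measure_iUnion_le _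
      _ ≤ ∑' σ : List Bool, ((1:ℝ≥0∞)/2)^(2*σ.length+2) := by
          apply ENNReal.tsum_le_tsum
          intro σ
          calc μ (condSet (V (3 * σ.length + 2)) σ)
              ≤ 2^σ.length * μ (V (3 * σ.length + 2)) :=
                Aux.measure_condSet_le μ hμ (hVmeas _) σ
            _ ≤ 2^σ.length * (1/2)^(3*σ.length+2) := mul_le_mul_right (hmeas _) _
            _ = ((1:ℝ≥0∞)/2)^(2*σ.length+2) := by
                rw [Aux.two_pow_mul_half_pow (by omega)]
                congr 1
                omega
      _ = 1/2 := Aux.tsum_lists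
  · intro k
    refine Set.mem_iUnion.2 ⟨[], ?_⟩
    have := Set.mem_iInter.1 (hX k) 2
    simpa [condSet, Aux.seqAppend_nil] using this
end

section
/- Let d be a positive martingale and σ a string with d(σ) ≤ 2 - 2^{-k}. Then there exist two incomparable extensions τ₀, τ₁ of σ such that d(τ') ≤ 2 - 2^{-(k+1)} for every prefix τ' of τ₀ or τ₁ extending σ. Consequently, given a positive normed martingale d, there is a map T : 2^{<ω} → 2^{<ω} that is monotone (strict extensions map to strict extensions), maps incomparable strings to incomparable strings, and such that d(τ') ≤ 2 - 2^{-|σ|} for all prefixes τ' of T(σ); hence every infinite path Y through the image tree satisfies d(Y↾n) ≤ 2 for all n, so d does not succeed on Y. -/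
open scoped ENNReal
open MeasureTheory Filter

def Pprop (d : List Bool → ℝ) (σ : List Bool) (k : ℕ) (τ₀ τ₁ : List Bool) : Prop :=
  σ <+: τ₀ ∧ σ <+: τ₁ ∧ ¬ τ₀ <+: τ₁ ∧ ¬ τ₁ <+: τ₀ ∧
    ∀ τ' : List Bool, σ <+: τ' → (τ' <+: τ₀ ∨ τ' <+: τ₁) → d τ' ≤ 2 - (1/2:ℝ)^(k+1)

noncomputable def minext (d : List Bool → ℝ) (σ : List Bool) : List Bool :=
  if d (σ ++ [false]) ≤ d (σ ++ [true]) then σ ++ [false] else σ ++ [true]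

lemma minext_prefix (d : List Bool → ℝ) (σ : List Bool) : σ <+: minext d σ := by
  unfold minext; split <;> exact List.prefix_append _ _

lemma minext_length (d : List Bool → ℝ) (σ : List Bool) :
    (minext d σ).length = σ.length + 1 := by
  unfold minext; split <;> simp

lemma minext_le (d : List Bool → ℝ)
    (hd : ∀ σ, d σ = (d (σ ++ [false]) + d (σ ++ [true])) / 2) (σ : List Bool) :
    d (minext d σ) ≤ d σ := by
  have h := hd σ
  unfold minext; split <;> linarith

lemma part1 (d : List Bool → ℝ)
    (hd : ∀ σ, d σ = (d (σ ++ [false]) + d (σ ++ [true])) / 2)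
    (hpos : ∀ σ, 0 < d σ) :
    ∀ σ k, d σ ≤ 2 - (1/2:ℝ)^k → ∃ τ₀ τ₁, Pprop d σ k τ₀ τ₁ := by
  intro σ k hσ
  set t : ℝ := (1/2:ℝ)^(k+1) with ht
  have htpos : 0 < t := by positivity
  set c : ℝ := 2 - t with hc
  set path : ℕ → List Bool := fun n => (minext d)^[n] σ with hpath
  have hsucc : ∀ n, path (n+1) = minext d (path n) := by
    intro n; simp [hpath, Function.iterate_succ_apply']
  have hchain : ∀ m n, m ≤ n → path m <+: path n := by
    intro m n hmn
    induction n, hmn using Nat.le_induction with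
    | base => exact List.prefix_refl _
    | succ n hmn ih => exact ih.trans (by rw [hsucc]; exact minext_prefix d _)
  have hlen : ∀ n, (path n).length = σ.length + n := by
    intro n; induction n with
    | zero => simp [hpath]
    | succ n ih => rw [hsucc, minext_length, ih]; ring
  have hmono : ∀ n, d (path n) ≤ d σ := by
    intro n; induction n with
    | zero => simp [hpath]
    | succ n ih => exact le_trans (by rw [hsucc]; exact minext_le d hd _) ih
  -- find branching node
  have hbranch : ∃ n, d (path n ++ [false]) ≤ c ∧ d (path n ++ [true]) ≤ c := by
    by_contra hcon
    push_neg at hcon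
    have key : ∀ n, d (path n) ≤ c - 2^n * t := by
      intro n; induction n with
      | zero =>
        have : (1/2:ℝ)^k = 2 * t := by rw [ht, pow_succ]; ring
        simp only [hpath, Function.iterate_zero, id]
        rw [hc]; linarith [hσ, this ▸ hσ]
      | succ n ih =>
        have havg := hd (path n)
        set a := d (path n ++ [false]) with ha
        set b := d (path n ++ [true]) with hb
        have hposa := hpos (path n ++ [false])
        have hposb := hpos (path n ++ [true])
        have hpow : (0:ℝ) < 2^n := by positivity
        have hdn := ih
        rw [hsucc]
        unfold minext
        rw [← ha, ← hb]
        split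
        · -- a ≤ b, min = a
          rename_i hab
          have hac : a ≤ c := by nlinarith
          have hbc := hcon n hac
          have : (2:ℝ)^(n+1) = 2 * 2^n := by ring
          rw [this]; nlinarith
        · rename_i hab
          push_neg at hab
          have hbc : b ≤ c := by nlinarith
          have hca : c < a := by
            by_contra h; push_neg at h
            exact absurd hbc (not_le.mpr (hcon n h))
          have : (2:ℝ)^(n+1) = 2 * 2^n := by ring
          rw [this]; nlinarith
    obtain ⟨n, hn⟩ := pow_unbounded_of_one_lt (c / t) (y := (2:ℝ)) one_lt_two
    have : c < 2^n * t := by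
      rw [div_lt_iff₀ htpos] at hn; linarith
    have h1 := key n
    have h2 := hpos (path n)
    linarith
  obtain ⟨n, hn0, hn1⟩ := hbranch
  refine ⟨path n ++ [false], path n ++ [true], ?_, ?_, ?_, ?_, ?_⟩
  · exact (hchain 0 n (Nat.zero_le n)).trans (List.prefix_append _ _)
  · exact (hchain 0 n (Nat.zero_le n)).trans (List.prefix_append _ _)
  · intro h
    have := h.eq_of_length (by simp)
    simpa using List.append_cancel_left this
  · intro h
    have := h.eq_of_length (by simp)
    simpa using List.append_cancel_left this
  · intro τ' hστ' hor
    have hck : 2 - (1/2:ℝ)^k ≤ c := by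
      rw [hc, ht, pow_succ]
      have : (0:ℝ) < (1/2)^k := by positivity
      linarith
    -- handle the case τ' equals an endpoint, else τ' <+: path n
    have hmain : ∀ b : Bool, τ' <+: path n ++ [b] → d τ' ≤ c := by
      intro b hb
      by_cases heq : τ' = path n ++ [b]
      · subst heq; cases b
        · exact hn0
        · exact hn1
      · have hlt : τ'.length ≤ (path n).length := by
          have h1 := hb.length_le
          simp at h1
          rcases Nat.lt_or_ge τ'.length ((path n).length + 1) with h | h
          · omega
          · exfalso; exact heq (hb.eq_of_length (by simp; omega))
        have hτpn : τ' <+: path n :=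
          List.prefix_of_prefix_length_le hb (List.prefix_append _ _) hlt
        have hσlen := hστ'.length_le
        set m := τ'.length - σ.length with hm
        have hmn : m ≤ n := by
          have := hτpn.length_le; rw [hlen n] at this; omega
        have hlm : (path m).length = τ'.length := by rw [hlen m]; omega
        have : τ' = path m := by
          have h1 : τ' <+: path m :=
            List.prefix_of_prefix_length_le hτpn (hchain m n hmn) (by omega)
          exact h1.eq_of_length hlm.symm
        rw [this]
        exact le_trans (hmono m) (le_trans hσ hck)
    rcases hor with h | h
    · exact hmain false h
    · exact hmain true h

open Classical in
noncomputable def Tstep (d : List Bool → ℝ) (ρ : List Bool) (k : ℕ) : List Bool × List Bool :=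
  if h : ∃ τ₀ τ₁, Pprop d ρ k τ₀ τ₁ then (h.choose, h.choose_spec.choose) else (ρ, ρ)

lemma Tstep_spec (d : List Bool → ℝ) (ρ : List Bool) (k : ℕ)
    (h : ∃ τ₀ τ₁, Pprop d ρ k τ₀ τ₁) :
    Pprop d ρ k (Tstep d ρ k).1 (Tstep d ρ k).2 := by
  unfold Tstep
  rw [dif_pos h]
  exact h.choose_spec.choose_spec

noncomputable def Trev (d : List Bool → ℝ) : List Bool → List Bool
  | [] => []
  | b :: s => if b then (Tstep d (Trev d s) s.length).2 else (Tstep d (Trev d s) s.length).1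

noncomputable def Tfun (d : List Bool → ℝ) (σ : List Bool) : List Bool := Trev d σ.reverse

section Main
variable (d : List Bool → ℝ)
    (hd : ∀ σ, d σ = (d (σ ++ [false]) + d (σ ++ [true])) / 2)
    (hpos : ∀ σ, 0 < d σ) (hnorm : d [] = 1)
include hd hpos hnorm

lemma TInv : ∀ s : List Bool, ∀ τ', τ' <+: Trev d s → d τ' ≤ 2 - (1/2:ℝ)^s.length := by
  intro s
  induction s with
  | nil =>
    intro τ' h
    rw [show Trev d [] = [] from rfl] at h
    rw [List.prefix_nil.mp h]
    simp only [List.length_nil, pow_zero]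
    linarith [hnorm]
  | cons b s ih =>
    intro τ' hτ'
    have hρ : d (Trev d s) ≤ 2 - (1/2:ℝ)^s.length := ih _ (List.prefix_refl _)
    have hex := part1 d hd hpos (Trev d s) s.length hρ
    have hs := Tstep_spec d (Trev d s) s.length hex
    have hρb : Trev d s <+: Trev d (b :: s) := by
      cases b
      · exact hs.1
      · exact hs.2.1
    have hhalf : (1/2:ℝ)^(s.length+1) ≤ (1/2:ℝ)^s.length := by
      rw [pow_succ]
      have : (0:ℝ) < (1/2)^s.length := by positivity
      linarith
    rcases List.prefix_or_prefix_of_prefix hτ' hρb with h | h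
    · have := ih τ' h
      simp only [List.length_cons]
      linarith
    · have hb : τ' <+: (Tstep d (Trev d s) s.length).1 ∨ τ' <+: (Tstep d (Trev d s) s.length).2 := by
        cases b
        · left; exact hτ'
        · right; exact hτ'
      have := hs.2.2.2.2 τ' h hb
      simpa using this
  
lemma Tsucc : ∀ (σ : List Bool) (b : Bool),
    Tfun d σ <+: Tfun d (σ ++ [b]) ∧ (Tfun d σ).length < (Tfun d (σ ++ [b])).length := by
  intro σ b
  have hrw : Tfun d (σ ++ [b]) = Trev d (b :: σ.reverse) := by
    simp [Tfun]
  have hρ : d (Trev d σ.reverse) ≤ 2 - (1/2:ℝ)^σ.reverse.length :=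
    TInv d hd hpos hnorm σ.reverse _ (List.prefix_refl _)
  have hex := part1 d hd hpos (Trev d σ.reverse) σ.reverse.length hρ
  have hs := Tstep_spec d (Trev d σ.reverse) σ.reverse.length hex
  have hpre : Tfun d σ <+: Tfun d (σ ++ [b]) := by
    rw [hrw]
    cases b
    · exact hs.1
    · exact hs.2.1
  refine ⟨hpre, lt_of_le_of_ne hpre.length_le ?_⟩
  intro hle
  have heq : Tfun d σ = Tfun d (σ ++ [b]) := hpre.eq_of_length hle
  rw [hrw] at heq
  cases b
  · have h21 : Tfun d σ <+: (Tstep d (Trev d σ.reverse) σ.reverse.length).2 := hs.2.1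
    have heq' : Tfun d σ = (Tstep d (Trev d σ.reverse) σ.reverse.length).1 := heq
    rw [heq'] at h21
    exact hs.2.2.1 h21
  · have h11 : Tfun d σ <+: (Tstep d (Trev d σ.reverse) σ.reverse.length).1 := hs.1
    have heq' : Tfun d σ = (Tstep d (Trev d σ.reverse) σ.reverse.length).2 := heq
    rw [heq'] at h11
    exact hs.2.2.2.1 h11

lemma Tmono : ∀ (σ rest : List Bool), rest ≠ [] →
    Tfun d σ <+: Tfun d (σ ++ rest) ∧ (Tfun d σ).length < (Tfun d (σ ++ rest)).length := by
  intro σ rest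
  induction rest using List.reverseRecOn with
  | nil => intro h; exact absurd rfl h
  | append_singleton rest b ih =>
    intro _
    by_cases hr : rest = []
    · subst hr; simpa using Tsucc d hd hpos hnorm σ b
    · have h1 := ih hr
      have h2 := Tsucc d hd hpos hnorm (σ ++ rest) b
      rw [← List.append_assoc]
      exact ⟨h1.1.trans h2.1, h1.2.trans h2.2⟩

lemma Tmono' : ∀ (σ σ' : List Bool), σ <+: σ' → Tfun d σ <+: Tfun d σ' := by
  intro σ σ' h
  obtain ⟨rest, rfl⟩ := h
  by_cases hr : rest = []
  · subst hr; simp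
  · exact (Tmono d hd hpos hnorm σ rest hr).1

lemma split_incomp : ∀ σ σ' : List Bool, ¬ σ <+: σ' → ¬ σ' <+: σ →
    ∃ (ρ : List Bool) (b : Bool), ρ ++ [b] <+: σ ∧ ρ ++ [!b] <+: σ' := by
  intro σ
  induction σ with
  | nil => intro σ' h _; exact absurd (List.nil_prefix) h
  | cons x s ih =>
    intro σ' h1 h2
    cases σ' with
    | nil => exact absurd (List.nil_prefix) h2
    | cons y s' =>
      by_cases hxy : x = y
      · subst hxy
        have hn1 : ¬ s <+: s' := fun h => h1 (List.cons_prefix_cons.mpr ⟨rfl, h⟩)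
        have hn2 : ¬ s' <+: s := fun h => h2 (List.cons_prefix_cons.mpr ⟨rfl, h⟩)
        obtain ⟨ρ, b, hb, hb'⟩ := ih s' hn1 hn2
        exact ⟨x :: ρ, b, List.cons_prefix_cons.mpr ⟨rfl, hb⟩,
          List.cons_prefix_cons.mpr ⟨rfl, hb'⟩⟩
      · refine ⟨[], x, List.cons_prefix_cons.mpr ⟨rfl, List.nil_prefix⟩, ?_⟩
        have hyx : (!x) = y := by cases x <;> cases y <;> first | rfl | exact absurd rfl hxy
        simp only [List.nil_append]
        rw [← hyx]
        exact List.cons_prefix_cons.mpr ⟨rfl, List.nil_prefix⟩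

lemma Tincomp_step : ∀ (ρ : List Bool) (b : Bool),
    ¬ Tfun d (ρ ++ [b]) <+: Tfun d (ρ ++ [!b]) := by
  intro ρ b
  have hρ : d (Trev d ρ.reverse) ≤ 2 - (1/2:ℝ)^ρ.reverse.length :=
    TInv d hd hpos hnorm ρ.reverse _ (List.prefix_refl _)
  have hex := part1 d hd hpos (Trev d ρ.reverse) ρ.reverse.length hρ
  have hs := Tstep_spec d (Trev d ρ.reverse) ρ.reverse.length hex
  have hrw : ∀ c : Bool, Tfun d (ρ ++ [c]) = Trev d (c :: ρ.reverse) := by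
    intro c; simp [Tfun]
  rw [hrw, hrw]
  cases b
  · exact hs.2.2.1
  · exact hs.2.2.2.1
end Main

theorem stmt19 (d : List Bool → ℝ)
    (hd : ∀ σ, d σ = (d (σ ++ [false]) + d (σ ++ [true])) / 2)
    (hpos : ∀ σ, 0 < d σ) (hnorm : d [] = 1) :
    (∀ (σ : List Bool) (k : ℕ), d σ ≤ 2 - (1 / 2 : ℝ) ^ k →
      ∃ τ₀ τ₁ : List Bool, σ <+: τ₀ ∧ σ <+: τ₁ ∧ ¬ τ₀ <+: τ₁ ∧ ¬ τ₁ <+: τ₀ ∧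
        ∀ τ' : List Bool, σ <+: τ' → (τ' <+: τ₀ ∨ τ' <+: τ₁) →
          d τ' ≤ 2 - (1 / 2 : ℝ) ^ (k + 1))
    ∧ ∃ T : List Bool → List Bool,
        (∀ σ σ' : List Bool, σ <+: σ' → σ ≠ σ' → (T σ <+: T σ' ∧ T σ ≠ T σ')) ∧
        (∀ σ σ' : List Bool, ¬ σ <+: σ' → ¬ σ' <+: σ → (¬ T σ <+: T σ' ∧ ¬ T σ' <+: T σ)) ∧
        (∀ (σ τ' : List Bool), τ' <+: T σ → d τ' ≤ 2 - (1 / 2 : ℝ) ^ σ.length) ∧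
        (∀ Y : ℕ → Bool, (∀ n : ℕ, ∃ σ : List Bool, seqTake Y n <+: T σ) →
          ∀ n : ℕ, d (seqTake Y n) ≤ 2) := by
  have bullet3 : ∀ (σ τ' : List Bool), τ' <+: Tfun d σ → d τ' ≤ 2 - (1 / 2 : ℝ) ^ σ.length := by
    intro σ τ' h
    have := TInv d hd hpos hnorm σ.reverse τ' h
    rwa [List.length_reverse] at this
  constructor
  · intro σ k h
    obtain ⟨τ₀, τ₁, h1, h2, h3, h4, h5⟩ := part1 d hd hpos σ k h
    exact ⟨τ₀, τ₁, h1, h2, h3, h4, h5⟩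
  · refine ⟨Tfun d, ?_, ?_, bullet3, ?_⟩
    · intro σ σ' hpre hne
      obtain ⟨rest, rfl⟩ := hpre
      have hr : rest ≠ [] := by rintro rfl; simp at hne
      obtain ⟨h1, h2⟩ := Tmono d hd hpos hnorm σ rest hr
      refine ⟨h1, ?_⟩
      intro he
      rw [he] at h2
      exact lt_irrefl _ h2
    · intro σ σ' hn1 hn2
      obtain ⟨ρ, b, hb, hb'⟩ := split_incomp d hd hpos hnorm σ σ' hn1 hn2
      have p1 : Tfun d (ρ ++ [b]) <+: Tfun d σ := Tmono' d hd hpos hnorm _ _ hb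
      have p2 : Tfun d (ρ ++ [!b]) <+: Tfun d σ' := Tmono' d hd hpos hnorm _ _ hb'
      have i1 := Tincomp_step d hd hpos hnorm ρ b
      have i2 := Tincomp_step d hd hpos hnorm ρ (!b)
      rw [Bool.not_not] at i2
      constructor
      · intro h
        rcases List.prefix_or_prefix_of_prefix (p1.trans h) p2 with hc | hc
        · exact i1 hc
        · exact i2 hc
      · intro h
        rcases List.prefix_or_prefix_of_prefix (p2.trans h) p1 with hc | hc
        · exact i2 hc
        · exact i1 hc
    · intro Y hY n
      obtain ⟨σ, hσ⟩ := hY n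
      have h1 := bullet3 σ _ hσ
      have h2 : (0:ℝ) < (1/2)^σ.length := by positivity
      linarith
end
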